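/- arXiv:math/0608743 — 3 statements merged into one kernel-verified Lean document; each statement's English description precedes it below -/
import Mathlib

section
/- For every integer m ≥ 1, (1/(4π²)) ∫_{ℝ^{2m−1}} x₁² / (e^{‖x‖²} − 1) dx = (π^{m−5/2}/8) ζ(m + 1/2), where ‖x‖ is the Euclidean norm, x₁ is the first coordinate, and ζ is the Riemann zeta function. (This is the universal constant ν_{m1} of the paper; in particular for m = 1 it equals ζ(3/2)/(8π^{3/2}).) -/
open MeasureTheory Filter Topology

section aux
open Real Set

lemma geom_aux {t : ℝ} (ht : 0 < t) :
    HasSum (fun k : ℕ => (if k = 0 then (0:ℝ) else 1) * rexp (-(k:ℝ) * t))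
      (1 / (rexp t - 1)) := by
  have hr1 : rexp (-t) < 1 := exp_lt_one_iff.mpr (by linarith)
  have h1 := hasSum_geometric_of_lt_one (exp_pos (-t)).le hr1
  have h2 : HasSum (fun k : ℕ => if k = 0 then (1:ℝ) else 0) 1 := hasSum_ite_eq 0 1
  have h3 := h1.sub h2
  have he : rexp t - 1 > 0 := by
    have h1e : (1:ℝ) < rexp t := by rw [← Real.exp_zero]; exact exp_lt_exp.mpr ht
    linarith
  have hv : (1 - rexp (-t))⁻¹ - 1 = 1 / (rexp t - 1) := by
    rw [Real.exp_neg]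
    have h0 : (0:ℝ) < rexp t := exp_pos t
    field_simp
    ring
  rw [hv] at h3
  refine h3.congr_fun fun k => ?_
  rcases Nat.eq_zero_or_pos k with hk | hk
  · simp [hk]
  · have : k ≠ 0 := hk.ne'
    simp only [this, if_false, one_mul, if_neg this]
    rw [← Real.exp_nat_mul]
    ring_nf

lemma mellin_zeta_aux {s : ℝ} (hs : 1 < s) :
    ∫ t in Ioi (0:ℝ), t ^ (s - 1) * (1 / (rexp t - 1))
      = Real.Gamma s * (riemannZeta (s:ℂ)).re := by
  have hs0 : 0 < (s:ℂ).re := by simp; linarith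
  have hs1 : 1 < (s:ℂ).re := by simpa using hs
  set F : ℝ → ℂ := fun t => ((1/(rexp t - 1) : ℝ) : ℂ) with hFdef
  have hF : ∀ t ∈ Ioi (0:ℝ),
      HasSum (fun k : ℕ => (if k = 0 then (0:ℂ) else 1) * (rexp (-(k:ℝ) * t) : ℂ)) (F t) := by
    intro t ht
    have h := (geom_aux ht).map Complex.ofRealCLM Complex.ofRealCLM.continuous
    refine h.congr_fun fun k => ?_
    simp [apply_ite Complex.ofRealCLM, apply_ite (Complex.ofReal)]
  have hsum : Summable fun k : ℕ => ‖(if k = 0 then (0:ℂ) else 1)‖ / (k:ℝ) ^ (s:ℂ).re := by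
    refine Summable.of_nonneg_of_le (fun k => by positivity) (fun k => ?_)
      (Real.summable_one_div_nat_rpow.mpr (by simpa using hs1))
    rcases Nat.eq_zero_or_pos k with hk | hk
    · simp [hk]; positivity
    · simp [hk.ne']
  have hp : ∀ k : ℕ, (if k = 0 then (0:ℂ) else 1) = 0 ∨ 0 < ((k:ℝ)) := by
    intro k
    rcases Nat.eq_zero_or_pos k with hk | hk
    · exact Or.inl (by simp [hk])
    · exact Or.inr (by exact_mod_cast hk)
  have H := hasSum_mellin hp hs0 hF hsum
  have htsum : (mellin F (s:ℂ)) = Complex.Gamma s * riemannZeta s := by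
    rw [← H.tsum_eq, zeta_eq_tsum_one_div_nat_cpow hs1, ← tsum_mul_left]
    refine tsum_congr fun k => ?_
    rcases Nat.eq_zero_or_pos k with hk | hk
    · subst hk
      rw [Nat.cast_zero, Nat.cast_zero,
        Complex.zero_cpow (Complex.ofReal_ne_zero.mpr (by positivity))]
      simp
    · simp only [hk.ne', if_neg, ite_false, mul_one, div_eq_mul_inv, mul_one_div]
      simp
  have hmre : mellin F (s:ℂ)
      = ((∫ t in Ioi (0:ℝ), t ^ (s - 1) * (1 / (rexp t - 1)) : ℝ) : ℂ) := by
    rw [mellin]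
    calc ∫ t in Ioi (0:ℝ), (t:ℂ) ^ ((s:ℂ) - 1) • F t
        = ∫ t in Ioi (0:ℝ), ((t ^ (s - 1) * (1 / (rexp t - 1)) : ℝ) : ℂ) := by
          refine setIntegral_congr_fun measurableSet_Ioi fun t ht => ?_
          have ht0 : (0:ℝ) ≤ t := le_of_lt ht
          rw [smul_eq_mul, hFdef]
          push_cast
          rw [Complex.ofReal_cpow ht0]
          push_cast
          ring
      _ = _ := integral_ofReal
  have := congrArg Complex.re (hmre.symm.trans htsum)
  rw [Complex.ofReal_re] at this
  rw [this, Complex.Gamma_ofReal]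
  exact Complex.re_ofReal_mul _ _

lemma radial_aux (m : ℕ) (hm : 1 ≤ m) :
    ∫ y in Ioi (0:ℝ), y ^ (2*m - 1 - 1) * (y ^ 2 / (rexp (y ^ 2) - 1))
      = (1/2) * (Real.Gamma ((m:ℝ) + 1/2) *
          (riemannZeta ((((m:ℝ) + 1/2 : ℝ)) : ℂ)).re) := by
  have hm' : (1:ℝ) ≤ (m:ℝ) := by exact_mod_cast hm
  set s : ℝ := (m:ℝ) + 1/2 with hsdef
  have hs : 1 < s := by rw [hsdef]; linarith
  set g : ℝ → ℝ := fun t => t ^ (s - 1) * (1 / (rexp t - 1)) with hg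
  have h1 : (∫ x in Ioi (0:ℝ), (|(2:ℝ)| * x ^ ((2:ℝ) - 1)) • g (x ^ (2:ℝ)))
      = ∫ y in Ioi (0:ℝ), g y := integral_comp_rpow_Ioi g two_ne_zero
  have h2 : ∀ x ∈ Ioi (0:ℝ), (|(2:ℝ)| * x ^ ((2:ℝ) - 1)) • g (x ^ (2:ℝ))
      = 2 * (x ^ (2*m - 1 - 1) * (x ^ 2 / (rexp (x ^ 2) - 1))) := by
    intro x hx
    have hx0 : (0:ℝ) < x := hx
    have hx2 : x ^ (2:ℝ) = x ^ 2 := by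
      rw [show (2:ℝ) = ((2:ℕ):ℝ) by norm_num, Real.rpow_natCast]
    have hD : (0:ℝ) < rexp (x ^ 2) - 1 := by
      have : (1:ℝ) < rexp (x ^ 2) := by
        rw [← Real.exp_zero]; exact Real.exp_lt_exp.mpr (by positivity)
      linarith
    have hpow : (x ^ 2 : ℝ) ^ (s - 1) = x ^ (2*m - 1) := by
      rw [← hx2, ← Real.rpow_mul hx0.le]
      rw [show (2:ℝ) * (s - 1) = ((2*m - 1 : ℕ) : ℝ) by
        have h2m : 1 ≤ 2*m := by omega
        push_cast [h2m]
        rw [hsdef]; ring]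
      exact Real.rpow_natCast x _
    rw [smul_eq_mul, hg]
    simp only [hx2, hpow]
    rw [show (2:ℝ) - 1 = 1 by norm_num, Real.rpow_one, abs_two]
    rw [show 2*m - 1 = (2*m - 1 - 1) + 1 by omega, pow_succ]
    simp only [Nat.add_sub_cancel]
    field_simp
  rw [setIntegral_congr_fun measurableSet_Ioi h2, integral_const_mul] at h1
  have h3 : (∫ y in Ioi (0:ℝ), g y) = Real.Gamma s * (riemannZeta (s:ℂ)).re :=
    mellin_zeta_aux hs
  rw [h3] at h1
  rw [hsdef] at h1
  linarith

lemma bound_aux {t : ℝ} (ht : 0 < t) : t / (rexp t - 1) ≤ 2 * rexp (-(t/2)) := by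
  have h1e : (1:ℝ) < rexp t := by rw [← Real.exp_zero]; exact exp_lt_exp.mpr ht
  have he : 0 < rexp t - 1 := by linarith
  rw [div_le_iff₀ he]
  have h1 : rexp (-(t/2)) * rexp t = rexp (t/2) := by
    rw [← Real.exp_add]; ring_nf
  have h2 : t/2 + 1 ≤ rexp (t/2) := Real.add_one_le_exp _
  have h3 : rexp (-(t/2)) ≤ 1 := Real.exp_le_one_iff.mpr (by linarith)
  nlinarith

section main
variable (m : ℕ)

local notation "E" => EuclideanSpace ℝ (Fin (2*m - 1))

lemma coord_sq_le (x : E) (i : Fin (2*m - 1)) : (x i)^2 ≤ ‖x‖^2 := by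
  rw [PiLp.norm_sq_eq_of_L2]
  have : (x i)^2 = ‖x i‖^2 := by rw [Real.norm_eq_abs, sq_abs]
  rw [this]
  exact Finset.single_le_sum (f := fun j => ‖x j‖^2)
    (fun j _ => by positivity) (Finset.mem_univ i)

lemma G_nonneg (x : E) (i : Fin (2*m - 1)) :
    0 ≤ (x i)^2 / (rexp (‖x‖^2) - 1) := by
  have : (0:ℝ) ≤ rexp (‖x‖^2) - 1 := by
    have : (1:ℝ) ≤ rexp (‖x‖^2) := by
      rw [← Real.exp_zero]; exact Real.exp_le_exp.mpr (by positivity)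
    linarith
  positivity

lemma G_bound (x : E) (i : Fin (2*m - 1)) :
    (x i)^2 / (rexp (‖x‖^2) - 1) ≤ 2 * rexp (-(‖x‖^2/2)) := by
  rcases eq_or_lt_of_le (norm_nonneg x) with h0 | h0
  · have hx : ‖x‖ = 0 := h0.symm
    have : x = 0 := norm_eq_zero.mp hx
    subst this
    simp [hx]
  · have ht : 0 < ‖x‖^2 := by positivity
    have h1e : (1:ℝ) < rexp (‖x‖^2) := by
      rw [← Real.exp_zero]; exact exp_lt_exp.mpr ht
    have he : 0 < rexp (‖x‖^2) - 1 := by linarith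
    calc (x i)^2 / (rexp (‖x‖^2) - 1) ≤ ‖x‖^2 / (rexp (‖x‖^2) - 1) := by
          exact (div_le_div_iff_of_pos_right he).mpr (coord_sq_le m x i)
      _ ≤ 2 * rexp (-(‖x‖^2/2)) := bound_aux ht

lemma G_meas (i : Fin (2*m - 1)) :
    AEStronglyMeasurable (fun x : E => (x i)^2 / (rexp (‖x‖^2) - 1)) volume := by
  have h1 : Continuous fun x : E => (x i)^2 := by fun_prop
  have h2 : Continuous fun x : E => rexp (‖x‖^2) - 1 := by fun_prop
  exact (h1.measurable.div h2.measurable).aestronglyMeasurable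

lemma gauss_int : Integrable (fun x : E => 2 * rexp (-(‖x‖^2/2))) := by
  have h := (GaussianFourier.integrable_cexp_neg_mul_sq_norm_add_of_euclideanSpace
    (b := (1/2:ℂ)) (by norm_num) 0 (0:E)).norm.const_mul 2
  refine h.congr (ae_of_all _ fun x => ?_)
  simp only [Complex.norm_exp]
  congr 1
  have h2 : ((‖x‖:ℂ))^2 = ((‖x‖^2 : ℝ) : ℂ) := by push_cast; ring
  rw [h2]
  simp only [Complex.add_re, Complex.mul_re, Complex.ofReal_re, Complex.ofReal_im,
    Complex.zero_re, Complex.zero_im, Complex.neg_re, Complex.neg_im, Complex.div_re,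
    Complex.one_re, Complex.one_im]
  norm_num
  ring

lemma G_integrable (i : Fin (2*m - 1)) :
    Integrable (fun x : E => (x i)^2 / (rexp (‖x‖^2) - 1)) := by
  refine (gauss_int m).mono' (G_meas m i) (ae_of_all _ fun x => ?_)
  rw [Real.norm_eq_abs, abs_of_nonneg (G_nonneg m x i)]
  exact G_bound m x i

lemma G_swap (hm : 1 ≤ m) (i : Fin (2*m - 1)) :
    ∫ x : E, (x i)^2 / (rexp (‖x‖^2) - 1)
      = ∫ x : E, (x ⟨0, Nat.lt_of_lt_of_le Nat.zero_lt_one (by omega)⟩)^2 / (rexp (‖x‖^2) - 1) := by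
  set i0 : Fin (2*m - 1) := ⟨0, by omega⟩ with hi0
  set σ : Fin (2*m - 1) ≃ Fin (2*m - 1) := Equiv.swap i0 i with hσ
  set T := LinearIsometryEquiv.piLpCongrLeft 2 ℝ ℝ σ with hT
  have hTm := T.measurePreserving
  have h := hTm.integral_comp (T.toHomeomorph.measurableEmbedding)
    (fun x : E => (x i0)^2 / (rexp (‖x‖^2) - 1))
  rw [← h]
  refine integral_congr_ae (ae_of_all _ fun x => ?_)
  have h1 : (T x) i0 = x i := by
    rw [hT, LinearIsometryEquiv.piLpCongrLeft_apply]
    rw [Equiv.piCongrLeft'_apply, hσ, Equiv.symm_swap, Equiv.swap_apply_left]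
  have h2 : ‖T x‖ = ‖x‖ := T.norm_map x
  simp only [h1, h2]

end main

end aux

theorem nu_m1_formula (m : ℕ) (hm : 1 ≤ m) :
    (1 / (4 * Real.pi ^ 2)) *
        ∫ x : EuclideanSpace ℝ (Fin (2 * m - 1)),
          (x ⟨0, by omega⟩) ^ 2 / (Real.exp (‖x‖ ^ 2) - 1)
      = (Real.pi ^ ((m : ℝ) - 5 / 2) / 8) * (riemannZeta ((m : ℂ) + 1 / 2)).re := by
  classical
  haveI : Nonempty (Fin (2*m-1)) := ⟨⟨0, by omega⟩⟩
  have hm' : (1:ℝ) ≤ (m:ℝ) := by exact_mod_cast hm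
  have h2m : 1 ≤ 2*m := by omega
  have hcast : ((2*m - 1 : ℕ) : ℝ) = 2*(m:ℝ) - 1 := by push_cast [h2m]; ring
  set I : ℝ := ∫ x : EuclideanSpace ℝ (Fin (2*m-1)), (x ⟨0, by omega⟩)^2 / (Real.exp (‖x‖^2) - 1) with hI
  set Z : ℝ := (riemannZeta ((m:ℂ) + 1/2)).re with hZ
  have hzeta : (((m:ℝ) + 1/2 : ℝ) : ℂ) = (m:ℂ) + 1/2 := by push_cast; ring
  -- step 1: n * I = integral of ‖x‖²/(exp ‖x‖² - 1)
  have hA : ∀ i : Fin (2*m-1), (∫ x : EuclideanSpace ℝ (Fin (2*m-1)), (x i)^2 / (Real.exp (‖x‖^2) - 1)) = I :=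
    fun i => G_swap m hm i
  have hB : ((2*m - 1 : ℕ) : ℝ) * I
      = ∑ i : Fin (2*m-1), ∫ x : EuclideanSpace ℝ (Fin (2*m-1)), (x i)^2 / (Real.exp (‖x‖^2) - 1) := by
    rw [Finset.sum_congr rfl (fun i _ => hA i), Finset.sum_const, Finset.card_univ,
      Fintype.card_fin, nsmul_eq_mul]
  have hC : (∑ i : Fin (2*m-1), ∫ x : EuclideanSpace ℝ (Fin (2*m-1)), (x i)^2 / (Real.exp (‖x‖^2) - 1))
      = ∫ x : EuclideanSpace ℝ (Fin (2*m-1)), ∑ i : Fin (2*m-1), (x i)^2 / (Real.exp (‖x‖^2) - 1) :=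
    (integral_finset_sum Finset.univ (fun i _ => G_integrable m i)).symm
  have hD : (∫ x : EuclideanSpace ℝ (Fin (2*m-1)), ∑ i : Fin (2*m-1), (x i)^2 / (Real.exp (‖x‖^2) - 1))
      = ∫ x : EuclideanSpace ℝ (Fin (2*m-1)), ‖x‖^2 / (Real.exp (‖x‖^2) - 1) := by
    refine integral_congr_ae (Filter.Eventually.of_forall fun x => ?_)
    beta_reduce
    have hx : ∑ i : Fin (2*m-1), (x i)^2 = ‖x‖^2 := by
      rw [PiLp.norm_sq_eq_of_L2]
      exact Finset.sum_congr rfl fun j _ => by rw [Real.norm_eq_abs, sq_abs]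
    rw [← Finset.sum_div, hx]
  have hsum : ((2*m - 1 : ℕ) : ℝ) * I = ∫ x : EuclideanSpace ℝ (Fin (2*m-1)), ‖x‖^2 / (Real.exp (‖x‖^2) - 1) :=
    hB.trans (hC.trans hD)
  -- step 2: polar coordinates
  have hrank : Module.finrank ℝ (EuclideanSpace ℝ (Fin (2*m-1))) = 2*m-1 := finrank_euclideanSpace_fin
  have hpolar : (∫ x : EuclideanSpace ℝ (Fin (2*m-1)), ‖x‖^2 / (Real.exp (‖x‖^2) - 1))
      = (2*m-1 : ℕ) • ((volume (Metric.ball (0:EuclideanSpace ℝ (Fin (2*m-1))) 1)).toReal •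
          ∫ y in Set.Ioi (0:ℝ), y ^ (2*m-1-1) • (y^2 / (Real.exp (y^2) - 1))) := by
    have h := integral_fun_norm_addHaar (volume : Measure (EuclideanSpace ℝ (Fin (2*m-1))))
      (fun r : ℝ => r^2 / (Real.exp (r^2) - 1))
    rw [hrank] at h
    exact h
  have hball : (volume (Metric.ball (0:EuclideanSpace ℝ (Fin (2*m-1))) 1)).toReal
      = Real.sqrt Real.pi ^ (2*m-1) / Real.Gamma ((m:ℝ) + 1/2) := by
    rw [EuclideanSpace.volume_ball]
    rw [Fintype.card_fin]
    simp only [ENNReal.ofReal_one, one_pow, one_mul]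
    rw [ENNReal.toReal_ofReal (by positivity)]
    congr 2
    rw [hcast]; ring
  have hrad : (∫ y in Set.Ioi (0:ℝ), y ^ (2*m-1-1) • (y^2 / (Real.exp (y^2) - 1)))
      = (1/2) * (Real.Gamma ((m:ℝ) + 1/2) * Z) := by
    simp only [smul_eq_mul]
    rw [radial_aux m hm, hzeta, ← hZ]
  -- combine
  have hGpos : 0 < Real.Gamma ((m:ℝ) + 1/2) := Real.Gamma_pos_of_pos (by positivity)
  have hn0 : ((2*m - 1 : ℕ) : ℝ) ≠ 0 := by rw [hcast]; intro h; nlinarith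
  have hIval : I = Real.sqrt Real.pi ^ (2*m-1) / Real.Gamma ((m:ℝ) + 1/2)
      * ((1/2) * (Real.Gamma ((m:ℝ) + 1/2) * Z)) := by
    apply mul_left_cancel₀ hn0
    rw [hsum, hpolar, hball, hrad, nsmul_eq_mul, smul_eq_mul]
  have hsqrt : Real.sqrt Real.pi ^ (2*m-1) = Real.pi ^ ((m:ℝ) - 1/2) := by
    rw [Real.sqrt_eq_rpow, ← Real.rpow_natCast (Real.pi ^ ((1:ℝ)/2)) (2*m-1),
      ← Real.rpow_mul Real.pi_pos.le]
    congr 1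
    rw [hcast]; ring
  have hsplit : Real.pi ^ ((m:ℝ) - 1/2) = Real.pi ^ ((m:ℝ) - 5/2) * Real.pi ^ 2 := by
    rw [← Real.rpow_natCast Real.pi 2, ← Real.rpow_add Real.pi_pos]
    congr 1
    push_cast; ring
  rw [hIval, hsqrt, hsplit]
  field_simp
  ring
end

section
/- Let p ≥ 1, q ≥ 0 be integers and write points of ℝ^{p+q} as x = (π₁(x), π₂(x)) with π₁(x) ∈ ℝ^p. Let u be a real-valued function on ℝ^{p+q} that is C¹ on (ℝ^p∖{0}) × ℝ^q, fix 1 ≤ j ≤ p+q, and suppose: (a) the pointwise partial derivative ∂u/∂x_j (defined off {0}×ℝ^q) is Lebesgue integrable on ℝ^{p+q}; (b) u(x) = o(|π₁(x)|^{−p+1}) as π₁(x) → 0, uniformly for π₂(x) in compact sets. Then for every φ ∈ C_c^∞(ℝ^{p+q}), ∫_{(ℝ^p∖{0})×ℝ^q} u · (∂φ/∂x_j) dx = −∫_{(ℝ^p∖{0})×ℝ^q} (∂u/∂x_j) · φ dx; i.e., the distributional derivative ∂u/∂x_j is given by the pointwise derivative. -/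
open MeasureTheory Filter Topology
open scoped NNReal

lemma smoothTransition_deriv_zero_of_neg {t : ℝ} (ht : t < 0) :
    deriv Real.smoothTransition t = 0 := by
  have h : Real.smoothTransition =ᶠ[nhds t] fun _ => (0:ℝ) :=
    eventually_of_mem (Iio_mem_nhds ht) fun s hs =>
      Real.smoothTransition.zero_of_nonpos (le_of_lt hs)
  rw [h.deriv_eq, deriv_const]

lemma smoothTransition_deriv_zero_of_gt {t : ℝ} (ht : 1 < t) :
    deriv Real.smoothTransition t = 0 := by
  have h : Real.smoothTransition =ᶠ[nhds t] fun _ => (1:ℝ) :=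
    eventually_of_mem (Ioi_mem_nhds ht) fun s hs =>
      Real.smoothTransition.one_of_one_le (le_of_lt hs)
  rw [h.deriv_eq, deriv_const]

lemma smoothTransition_lipschitz : ∃ C : ℝ≥0, LipschitzWith C Real.smoothTransition := by
  have hcd : ContDiff ℝ 1 Real.smoothTransition := Real.smoothTransition.contDiff
  have hd : Differentiable ℝ Real.smoothTransition := hcd.differentiable one_ne_zero
  have hc : Continuous (deriv Real.smoothTransition) := hcd.continuous_deriv le_rfl
  obtain ⟨t₀, -, ht₀⟩ := (isCompact_Icc (a := (0:ℝ)) (b := 1)).exists_isMaxOn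
    ⟨0, by norm_num⟩ (hc.norm.continuousOn)
  refine ⟨‖deriv Real.smoothTransition t₀‖₊, lipschitzWith_of_nnnorm_deriv_le hd ?_⟩
  intro t
  rcases lt_or_ge t 0 with h | h
  · simp [smoothTransition_deriv_zero_of_neg h]
  rcases le_or_gt t 1 with h1 | h1
  · have := ht₀ ⟨h, h1⟩
    simpa [← NNReal.coe_le_coe] using this
  · simp [smoothTransition_deriv_zero_of_gt h1]


lemma integrableOn_abs_rpow_Icc {a : ℝ} (ha : -1 < a) (R : ℝ) :
    IntegrableOn (fun t : ℝ => |t| ^ a) (Set.Icc (-R) R) := by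
  rcases le_or_gt R 0 with hR | hR
  · have hnull : (volume : Measure ℝ) (Set.Icc (-R) R) = 0 := by
      rcases lt_or_eq_of_le hR with h | h
      · rw [Set.Icc_eq_empty (by linarith)]; simp
      · subst h; simp
    have : (volume : Measure ℝ).restrict (Set.Icc (-R) R) = 0 :=
      Measure.restrict_eq_zero.2 hnull
    rw [IntegrableOn, this]
    exact integrable_zero_measure
  · have h1 : IntervalIntegrable (fun t : ℝ => t ^ a) volume 0 R :=
      intervalIntegral.intervalIntegrable_rpow' ha
    have h2 : IntervalIntegrable (fun t : ℝ => (-t) ^ a) volume 0 (-R) := by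
      have := (IntervalIntegrable.iff_comp_neg (by simp)).1 h1
      simpa using this
    have h1' : IntegrableOn (fun t : ℝ => t ^ a) (Set.Ioc 0 R) := by
      rw [intervalIntegrable_iff] at h1
      simpa [Set.uIoc_of_le hR.le] using h1
    have h2' : IntegrableOn (fun t : ℝ => (-t) ^ a) (Set.Ioc (-R) 0) := by
      rw [intervalIntegrable_iff] at h2
      have : Set.uIoc (0:ℝ) (-R) = Set.Ioc (-R) 0 := by
        rw [Set.uIoc_of_ge (by linarith)]
      rwa [this] at h2
    have hIoc : IntegrableOn (fun t : ℝ => |t| ^ a) (Set.Ioc (-R) 0 ∪ Set.Ioc 0 R) := by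
      apply IntegrableOn.union
      · exact h2'.congr_fun (fun t ht => by rw [abs_of_nonpos ht.2]) measurableSet_Ioc
      · exact h1'.congr_fun (fun t ht => by rw [abs_of_pos ht.1]) measurableSet_Ioc
    have hU : Set.Ioc (-R) 0 ∪ Set.Ioc 0 R = Set.Ioc (-R) R :=
      Set.Ioc_union_Ioc_eq_Ioc (by linarith) hR.le
    rw [hU] at hIoc
    rw [IntegrableOn, ← Measure.restrict_congr_set Ioc_ae_eq_Icc]
    exact hIoc

set_option maxHeartbeats 2000000 in
/-- Distributional derivatives given by pointwise derivatives for functions that are `C¹`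
off the subspace `{π₁(x) = 0}` and blow up slower than `|π₁(x)|^{1-p}` near it.
Points of `ℝ^{p+q}` are modelled as `Fin (p+q) → ℝ`; the first `p` coordinates are
`x (Fin.castAdd q i)` for `i : Fin p`, and the last `q` coordinates are
`x (Fin.natAdd p i)` for `i : Fin q`.  The partial derivative `∂/∂x_j` is the
directional derivative along `Pi.single j 1`. -/
theorem distributional_derivative_eq_pointwise (p q : ℕ) (hp : 1 ≤ p) (j : Fin (p + q))
    (u : (Fin (p + q) → ℝ) → ℝ)
    (hu : ContDiffOn ℝ 1 u {x | ∃ i : Fin p, x (Fin.castAdd q i) ≠ 0})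
    (hInt : IntegrableOn (fun x => fderiv ℝ u x (Pi.single j 1))
      {x | ∃ i : Fin p, x (Fin.castAdd q i) ≠ 0})
    (hsmall : ∀ K : Set (Fin q → ℝ), IsCompact K → ∀ ε > 0, ∃ δ > 0,
      ∀ x : Fin (p + q) → ℝ,
        0 < Real.sqrt (∑ i : Fin p, x (Fin.castAdd q i) ^ 2) →
        Real.sqrt (∑ i : Fin p, x (Fin.castAdd q i) ^ 2) < δ →
        (fun i : Fin q => x (Fin.natAdd p i)) ∈ K →
        |u x| ≤ ε * Real.sqrt (∑ i : Fin p, x (Fin.castAdd q i) ^ 2) ^ ((1 : ℝ) - p))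
    (φ : (Fin (p + q) → ℝ) → ℝ) (hφ : ContDiff ℝ (⊤ : ℕ∞) φ) (hφc : HasCompactSupport φ) :
    ∫ x in {x | ∃ i : Fin p, x (Fin.castAdd q i) ≠ 0},
        u x * fderiv ℝ φ x (Pi.single j 1)
      = -∫ x in {x | ∃ i : Fin p, x (Fin.castAdd q i) ≠ 0},
          fderiv ℝ u x (Pi.single j 1) * φ x := by
  classical
  set c : Fin p → Fin (p + q) := Fin.castAdd q with hc
  set Ω : Set (Fin (p + q) → ℝ) := {x | ∃ i : Fin p, x (c i) ≠ 0} with hΩ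
  set r : (Fin (p + q) → ℝ) → ℝ := fun x => Real.sqrt (∑ i : Fin p, x (c i) ^ 2) with hr
  set F : (Fin (p + q) → ℝ) → EuclideanSpace ℝ (Fin p) := fun x => WithLp.toLp 2 (fun i => x (c i)) with hF
  have hrF : ∀ x, r x = ‖F x‖ := by
    intro x
    rw [EuclideanSpace.norm_eq]
    simp only [hr, hF, Real.norm_eq_abs, sq_abs, PiLp.toLp_apply]
  have hΩopen : IsOpen Ω := by
    have : Ω = ⋃ i : Fin p, {x : Fin (p + q) → ℝ | x (c i) ≠ 0} := by
      ext x; simp [hΩ]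
    rw [this]
    exact isOpen_iUnion fun i => (isOpen_ne).preimage (continuous_apply (c i))
  have hrpos : ∀ x, x ∈ Ω ↔ 0 < r x := by
    intro x
    constructor
    · rintro ⟨i, hi⟩
      apply Real.sqrt_pos.2
      have h1 : (0:ℝ) < x (c i) ^ 2 := by positivity
      exact lt_of_lt_of_le h1 (Finset.single_le_sum
        (fun i _ => sq_nonneg (x (c i))) (Finset.mem_univ i))
    · intro h
      by_contra hx
      simp only [hΩ, Set.mem_setOf_eq, not_exists, not_not] at hx
      have hzero : r x = 0 := by simp [hr, hx]
      linarith
  have hrcont : Continuous r :=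
    Real.continuous_sqrt.comp (continuous_finset_sum _ fun i _ => (continuous_apply (c i)).pow 2)
  have hrlip : LipschitzWith (p : ℝ≥0) r := by
    apply LipschitzWith.of_dist_le_mul
    intro x y
    have hsub : F x - F y = F (x - y) := by rw [hF]; ext i; simp
    have hFle : ∀ z, ‖F z‖ ≤ Real.sqrt p * ‖z‖ := by
      intro z
      rw [EuclideanSpace.norm_eq]
      have h1 : ∑ i : Fin p, ‖F z i‖ ^ 2 ≤ ∑ _i : Fin p, ‖z‖ ^ 2 := by
        refine Finset.sum_le_sum fun i _ => ?_
        have := norm_le_pi_norm z (c i)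
        have h0 : (0:ℝ) ≤ ‖F z i‖ := norm_nonneg _
        simpa [hF] using pow_le_pow_left₀ h0 (by simpa [hF] using this) 2
      calc Real.sqrt (∑ i : Fin p, ‖F z i‖ ^ 2) ≤ Real.sqrt (∑ _i : Fin p, ‖z‖ ^ 2) :=
            Real.sqrt_le_sqrt h1
        _ = Real.sqrt (p * ‖z‖ ^ 2) := by simp [Finset.sum_const, mul_comm]
        _ = Real.sqrt p * ‖z‖ := by
            rw [Real.sqrt_mul (by positivity), Real.sqrt_sq (norm_nonneg _)]
    have hsqrtle : Real.sqrt p ≤ (p : ℝ) := by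
      have hp1 : (1:ℝ) ≤ p := by exact_mod_cast hp
      nlinarith [Real.sq_sqrt (by positivity : (0:ℝ) ≤ (p:ℝ)), Real.sqrt_nonneg (p:ℝ)]
    calc dist (r x) (r y) = |‖F x‖ - ‖F y‖| := by rw [Real.dist_eq, hrF, hrF]
      _ ≤ ‖F x - F y‖ := abs_norm_sub_norm_le _ _
      _ = ‖F (x - y)‖ := by rw [hsub]
      _ ≤ Real.sqrt p * ‖x - y‖ := hFle _
      _ ≤ p * dist x y := by
          rw [dist_eq_norm]
          have := norm_nonneg (x - y)
          exact mul_le_mul_of_nonneg_right hsqrtle this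
  -- the complement of Ω is a null set
  have hΩnull : volume Ωᶜ = 0 := by
    have hsub : Ωᶜ ⊆ {x : Fin (p + q) → ℝ | x (c ⟨0, hp⟩) = 0} := by
      intro x hx
      simp only [hΩ, Set.mem_compl_iff, Set.mem_setOf_eq, not_exists, not_not] at hx
      exact hx _
    refine measure_mono_null hsub ?_
    have := MeasureTheory.Measure.pi_hyperplane (fun _ : Fin (p+q) => (volume : Measure ℝ))
      (c ⟨0, hp⟩) (0:ℝ)
    simpa [MeasureTheory.volume_pi] using this
  have haeΩ : ∀ᵐ x : Fin (p + q) → ℝ, x ∈ Ω := by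
    rw [MeasureTheory.ae_iff]; exact hΩnull
  have hrestrict : (volume : Measure (Fin (p + q) → ℝ)).restrict Ω = volume :=
    Measure.restrict_eq_self_of_ae_mem haeΩ
  
  -- smoothness of r on Ω
  have hrsmooth : ∀ x ∈ Ω, ContDiffAt ℝ 1 r x := by
    intro x hx
    have hS : ContDiff ℝ 1 (fun x : Fin (p+q) → ℝ => ∑ i : Fin p, x (c i) ^ 2) :=
      ContDiff.sum fun i _ => ((ContinuousLinearMap.proj (R := ℝ)
        (φ := fun _ : Fin (p+q) => ℝ) (c i)).contDiff).pow 2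
    have hSpos : 0 < ∑ i : Fin p, x (c i) ^ 2 := by
      have := (hrpos x).1 hx
      rw [hr] at this
      exact Real.sqrt_pos.1 this
    exact (Real.contDiffAt_sqrt (ne_of_gt hSpos)).comp x hS.contDiffAt
  -- the cutoff functions
  obtain ⟨Cθ, hCθ⟩ := smoothTransition_lipschitz
  set θ := Real.smoothTransition with hθ
  set χ : ℕ → (Fin (p + q) → ℝ) → ℝ :=
    fun n x => θ ((n + 1 : ℝ) * r x - 1) with hχ
  have hn1pos : ∀ n : ℕ, (0:ℝ) < n + 1 := fun n => by positivity
  have hχ0 : ∀ (n : ℕ) (x), r x ≤ 1 / (n + 1 : ℝ) → χ n x = 0 := by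
    intro n x hx
    apply Real.smoothTransition.zero_of_nonpos
    rw [le_div_iff₀ (hn1pos n)] at hx
    nlinarith
  have hχ1 : ∀ (n : ℕ) (x), 2 / (n + 1 : ℝ) ≤ r x → χ n x = 1 := by
    intro n x hx
    apply Real.smoothTransition.one_of_one_le
    rw [div_le_iff₀ (hn1pos n)] at hx
    nlinarith
  have hχmem : ∀ (n : ℕ) (x), 0 ≤ χ n x ∧ χ n x ≤ 1 := fun n x =>
    ⟨Real.smoothTransition.nonneg _, Real.smoothTransition.le_one _⟩
  -- χ n is zero on a neighborhood of points with small r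
  have hχ0nhds : ∀ (n : ℕ) (x), r x < 1 / (n + 1 : ℝ) →
      χ n =ᶠ[nhds x] fun _ => (0:ℝ) := by
    intro n x hx
    have hopen : IsOpen {y : Fin (p+q) → ℝ | r y < 1 / (n + 1 : ℝ)} :=
      isOpen_lt hrcont continuous_const
    exact eventually_of_mem (hopen.mem_nhds hx) fun y hy => hχ0 n y (le_of_lt hy)
  have hχ1nhds : ∀ (n : ℕ) (x), 2 / (n + 1 : ℝ) < r x →
      χ n =ᶠ[nhds x] fun _ => (1:ℝ) := by
    intro n x hx
    have hopen : IsOpen {y : Fin (p+q) → ℝ | 2 / (n + 1 : ℝ) < r y} :=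
      isOpen_lt continuous_const hrcont
    exact eventually_of_mem (hopen.mem_nhds hx) fun y hy => hχ1 n y (le_of_lt hy)
  -- χ n is C¹
  have hχsmooth : ∀ n : ℕ, ContDiff ℝ 1 (χ n) := by
    intro n
    rw [contDiff_iff_contDiffAt]
    intro x
    rcases lt_or_ge (r x) (1 / (n + 1 : ℝ)) with hx | hx
    · exact contDiffAt_const.congr_of_eventuallyEq (hχ0nhds n x hx)
    · have hxΩ : x ∈ Ω := (hrpos x).2 (lt_of_lt_of_le (by positivity) hx)
      exact (Real.smoothTransition.contDiff.contDiffAt).comp x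
        ((contDiffAt_const.mul (hrsmooth x hxΩ)).sub contDiffAt_const)
  
  -- Lipschitz bound for χ n
  have hχlip : ∀ n : ℕ, LipschitzWith (Cθ * ((n+1 : ℝ≥0) * p)) (χ n) := by
    intro n
    have hmid : LipschitzWith (n+1 : ℝ≥0) (fun t : ℝ => (n + 1 : ℝ) * t - 1) := by
      apply LipschitzWith.of_dist_le_mul
      intro x y
      rw [Real.dist_eq, Real.dist_eq]
      have : (n + 1 : ℝ) * x - 1 - ((n + 1 : ℝ) * y - 1) = (n+1 : ℝ) * (x - y) := by ring
      rw [this, abs_mul, abs_of_pos (hn1pos n)]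
      apply mul_le_mul_of_nonneg_right _ (abs_nonneg _)
      push_cast
      exact le_rfl
    exact hCθ.comp (hmid.comp hrlip)
  -- norm of the direction vector
  have hej : ‖(Pi.single j 1 : Fin (p+q) → ℝ)‖ = 1 := by
    have := Pi.nnnorm_single (ι := Fin (p+q)) (G := fun _ => ℝ) (i := j) (1:ℝ)
    have h2 : ‖(Pi.single j 1 : Fin (p+q) → ℝ)‖₊ = ‖(1:ℝ)‖₊ := this
    calc ‖(Pi.single j 1 : Fin (p+q) → ℝ)‖ = ((‖(Pi.single j 1 : Fin (p+q) → ℝ)‖₊ : ℝ≥0) : ℝ) := rfl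
      _ = ((‖(1:ℝ)‖₊ : ℝ≥0) : ℝ) := by rw [h2]
      _ = 1 := by simp
  set L : ℝ := (Cθ : ℝ) * p with hL
  have hLnn : 0 ≤ L := by positivity
  have hχderiv : ∀ (n : ℕ) (x), |fderiv ℝ (χ n) x (Pi.single j 1)| ≤ L * (n+1) := by
    intro n x
    have hd : HasFDerivAt (χ n) (fderiv ℝ (χ n) x) x :=
      (((hχsmooth n).differentiable one_ne_zero) x).hasFDerivAt
    have hb := hd.le_of_lipschitz (hχlip n)
    calc |fderiv ℝ (χ n) x (Pi.single j 1)| = ‖fderiv ℝ (χ n) x (Pi.single j 1)‖ := rfl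
      _ ≤ ‖fderiv ℝ (χ n) x‖ * ‖(Pi.single j 1 : Fin (p+q) → ℝ)‖ :=
          (fderiv ℝ (χ n) x).le_opNorm _
      _ ≤ ((Cθ * ((n+1 : ℝ≥0) * p) : ℝ≥0) : ℝ) * 1 := by
          rw [hej]; exact mul_le_mul_of_nonneg_right hb zero_le_one
      _ = L * (n+1) := by push_cast [hL]; ring
  -- facts about φ and its derivative
  set dφ : (Fin (p + q) → ℝ) → ℝ := fun x => fderiv ℝ φ x (Pi.single j 1) with hdφ
  have hφcont : Continuous φ := hφ.continuous
  have hdφcont : Continuous dφ := by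
    have h1 := hφ.continuous_fderiv_apply (by simp)
    exact h1.comp (continuous_id.prodMk continuous_const)
  have hdφsupp : HasCompactSupport dφ := hφc.fderiv_apply ℝ (Pi.single j 1)
  obtain ⟨Mφ, hMφ⟩ := hφc.exists_bound_of_continuous hφcont
  obtain ⟨Mdφ, hMdφ⟩ := hdφsupp.exists_bound_of_continuous hdφcont
  have hMφ0 : 0 ≤ Mφ := le_trans (norm_nonneg _) (hMφ 0)
  -- facts about u
  have hudiff : ∀ x ∈ Ω, DifferentiableAt ℝ u x :=
    fun x hx => ((hu.contDiffAt (hΩopen.mem_nhds hx)).differentiableAt one_ne_zero)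
  have hucont : ContinuousOn u Ω := hu.continuousOn
  set du : (Fin (p + q) → ℝ) → ℝ := fun x => fderiv ℝ u x (Pi.single j 1) with hdu
  have hduInt : Integrable du := by
    rw [← hrestrict]; exact hInt
  have hdumeas : AEStronglyMeasurable du volume := hduInt.aestronglyMeasurable
  -- the truncated functions
  set f : ℕ → (Fin (p + q) → ℝ) → ℝ := fun n x => u x * χ n x with hf'
  have hfsmooth : ∀ n, ContDiff ℝ 1 (f n) := by
    intro n
    rw [contDiff_iff_contDiffAt]
    intro x
    rcases lt_or_ge (r x) (1 / (n + 1 : ℝ)) with hx | hx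
    · refine (contDiffAt_const (c := (0:ℝ))).congr_of_eventuallyEq ?_
      filter_upwards [hχ0nhds n x hx] with y hy
      simp [hf', hy]
    · have hxΩ : x ∈ Ω := (hrpos x).2 (lt_of_lt_of_le (by positivity) hx)
      exact (hu.contDiffAt (hΩopen.mem_nhds hxΩ)).mul (hχsmooth n).contDiffAt
  have hfdiff : ∀ n, Differentiable ℝ (f n) := fun n => (hfsmooth n).differentiable one_ne_zero
  -- derivative decomposition on Ω
  have hfderiv : ∀ n, ∀ x ∈ Ω, fderiv ℝ (f n) x (Pi.single j 1)
      = du x * χ n x + u x * fderiv ℝ (χ n) x (Pi.single j 1) := by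
    intro n x hx
    have h1 : fderiv ℝ (f n) x = u x • fderiv ℝ (χ n) x + χ n x • fderiv ℝ u x :=
      fderiv_mul (hudiff x hx) (((hχsmooth n).differentiable one_ne_zero) x)
    rw [h1]
    simp [hdu]
    ring
  have hppos : (0:ℝ) < p := by exact_mod_cast hp
  have hp1R : (1:ℝ) ≤ p := by exact_mod_cast hp
  -- AM-GM bound : r ^ (1-p) ≤ ∏ |x_i| ^ ((1-p)/p)
  have hAMGM : ∀ x : Fin (p+q) → ℝ, (∀ i : Fin p, x (c i) ≠ 0) → 0 < r x →
      r x ^ ((1:ℝ) - p) ≤ ∏ i : Fin p, |x (c i)| ^ (((1:ℝ) - p)/p) := by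
    intro x hx hrx
    have hGM : ∏ i : Fin p, (x (c i)^2) ^ ((1:ℝ)/p) ≤ ∑ i : Fin p, (1/(p:ℝ)) * (x (c i)^2) :=
      Real.geom_mean_le_arith_mean_weighted Finset.univ (fun _ => 1/(p:ℝ))
        (fun i => x (c i)^2) (fun i _ => by positivity)
        (by rw [Finset.sum_const]; simp; field_simp) (fun i _ => sq_nonneg _)
    have hsum : ∑ i : Fin p, (1/(p:ℝ)) * (x (c i)^2) ≤ ∑ i : Fin p, x (c i)^2 := by
      refine Finset.sum_le_sum fun i _ => ?_
      have h1 : (1/(p:ℝ)) ≤ 1 := by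
        rw [div_le_one hppos]; exact hp1R
      nlinarith [sq_nonneg (x (c i))]
    have hr2 : ∑ i : Fin p, x (c i)^2 = r x ^ (2:ℕ) := by
      rw [hr]; rw [Real.sq_sqrt]; positivity
    have hGMpos : 0 < ∏ i : Fin p, (x (c i)^2) ^ ((1:ℝ)/p) :=
      Finset.prod_pos fun i _ => Real.rpow_pos_of_pos (by
        have := hx i; positivity) _
    have he : ((1:ℝ) - p)/2 ≤ 0 := by linarith
    have h2 : (r x ^ (2:ℕ)) ^ (((1:ℝ) - p)/2) ≤
        (∏ i : Fin p, (x (c i)^2) ^ ((1:ℝ)/p)) ^ (((1:ℝ) - p)/2) :=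
      Real.rpow_le_rpow_of_nonpos hGMpos (hGM.trans (hsum.trans_eq hr2)) he
    calc r x ^ ((1:ℝ) - p) = (r x ^ (2:ℕ)) ^ (((1:ℝ) - p)/2) := by
          rw [← Real.rpow_natCast (r x) 2, ← Real.rpow_mul hrx.le]
          congr 1
          ring
      _ ≤ (∏ i : Fin p, (x (c i)^2) ^ ((1:ℝ)/p)) ^ (((1:ℝ) - p)/2) := h2
      _ = ∏ i : Fin p, |x (c i)| ^ (((1:ℝ) - p)/p) := by
          rw [← Real.finset_prod_rpow _ _ (fun i _ => Real.rpow_nonneg (sq_nonneg _) _)]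
          refine Finset.prod_congr rfl fun i _ => ?_
          rw [← Real.rpow_mul (sq_nonneg _), ← sq_abs,
            ← Real.rpow_natCast (|x (c i)|) 2, ← Real.rpow_mul (abs_nonneg _)]
          congr 1
          push_cast
          field_simp
  -- a.e. all first-block coordinates are nonzero
  have haecoords : ∀ᵐ x : Fin (p + q) → ℝ, ∀ i : Fin p, x (c i) ≠ 0 := by
    rw [MeasureTheory.ae_all_iff]
    intro i
    have := MeasureTheory.Measure.ae_eval_ne (fun _ : Fin (p+q) => (volume : Measure ℝ))
      (c i) (0:ℝ)
    simpa [MeasureTheory.volume_pi] using this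
  -- u is a.e. strongly measurable
  have humeas : AEStronglyMeasurable u volume := by
    have h1 : AEMeasurable u (volume.restrict Ω) := hucont.aemeasurable hΩopen.measurableSet
    rw [hrestrict] at h1
    exact h1.aestronglyMeasurable
  -- a bound R for the support of φ
  obtain ⟨R, hRpos, hRsupp⟩ : ∃ R > 0, tsupport φ ⊆ Metric.closedBall 0 R := by
    rcases hφc.isBounded.subset_closedBall 0 with ⟨R, hR⟩
    exact ⟨max R 1, lt_of_lt_of_le one_pos (le_max_right _ _),
      hR.trans (Metric.closedBall_subset_closedBall (le_max_left _ _))⟩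
  have hcoordR : ∀ x ∈ tsupport φ, ∀ k : Fin (p+q), |x k| ≤ R := by
    intro x hx k
    have h1 : ‖x‖ ≤ R := by simpa using Metric.mem_closedBall.1 (hRsupp hx)
    exact le_trans (norm_le_pi_norm x k) h1
  -- the compact set of "tails"
  set K : Set (Fin q → ℝ) := (fun x : Fin (p+q) → ℝ => fun i : Fin q => x (Fin.natAdd p i))
    '' tsupport φ with hK
  have hKcomp : IsCompact K :=
    hφc.image (continuous_pi fun i => continuous_apply _)
  
  set Fu : (Fin (p+q) → ℝ) → ℝ := fun x => u x * dφ x with hFu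
  have hFumeas : AEStronglyMeasurable Fu volume := humeas.mul hdφcont.aestronglyMeasurable
  obtain ⟨δ, hδpos, hδ⟩ := hsmall K hKcomp 1 one_pos
  have htail : ∀ x ∈ tsupport φ, (fun i : Fin q => x (Fin.natAdd p i)) ∈ K :=
    fun x hx => ⟨x, hx, rfl⟩
  set a : ℝ := ((1:ℝ) - p)/p with ha
  have hagt : -1 < a := by
    rw [ha, lt_div_iff₀ hppos]; linarith
  set g : Fin (p+q) → ℝ → ℝ := fun k t =>
    if (k:ℕ) < p then Set.indicator (Set.Icc (-R) R) (fun s => |s| ^ a) t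
    else Set.indicator (Set.Icc (-R) R) (fun _ => (1:ℝ)) t with hg
  have hgint : ∀ k, Integrable (g k) volume := by
    intro k
    by_cases hk : (k:ℕ) < p
    · simp only [hg, hk, if_true]
      rw [integrable_indicator_iff measurableSet_Icc]
      exact integrableOn_abs_rpow_Icc hagt R
    · simp only [hg, hk, if_false]
      rw [integrable_indicator_iff measurableSet_Icc]
      exact integrableOn_const measure_Icc_lt_top.ne
  set W : (Fin (p+q) → ℝ) → ℝ := fun x => ∏ k, g k (x k) with hW
  have hWint : Integrable W volume := MeasureTheory.Integrable.fintype_prod hgint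
  have hWval : ∀ x ∈ tsupport φ, W x = ∏ i : Fin p, |x (c i)| ^ a := by
    intro x hx
    have hsplit : W x = (∏ i : Fin p, g (c i) (x (c i))) *
        ∏ i : Fin q, g (Fin.natAdd p i) (x (Fin.natAdd p i)) := by
      rw [hW]
      exact Fin.prod_univ_add (f := fun k => g k (x k))
    have hmem : ∀ k : Fin (p+q), x k ∈ Set.Icc (-R) R := by
      intro k
      rcases abs_le.1 (hcoordR x hx k) with ⟨h1, h2⟩
      exact ⟨h1, h2⟩
    have h2 : ∏ i : Fin q, g (Fin.natAdd p i) (x (Fin.natAdd p i)) = 1 := by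
      refine Finset.prod_eq_one fun i _ => ?_
      have hni : ¬ ((Fin.natAdd p i : Fin (p+q)) : ℕ) < p := by
        simp [Fin.natAdd]
      simp only [hg, hni, if_false]
      rw [Set.indicator_of_mem (hmem _)]
    have h1 : ∏ i : Fin p, g (c i) (x (c i)) = ∏ i : Fin p, |x (c i)| ^ a := by
      refine Finset.prod_congr rfl fun i _ => ?_
      have hci : ((c i : Fin (p+q)) : ℕ) < p := by
        simp [hc, Fin.coe_castAdd]
      simp only [hg, hci, if_true]
      rw [Set.indicator_of_mem (hmem _)]
    rw [hsplit, h1, h2, mul_one]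
  -- pointwise bound on the small-radius part
  set S₂ : Set (Fin (p+q) → ℝ) := tsupport φ ∩ {x | r x ≤ δ/2} with hS₂
  have hS₂meas : MeasurableSet S₂ :=
    (isClosed_tsupport φ).measurableSet.inter
      ((isClosed_le hrcont continuous_const).measurableSet)
  have hIntS₂ : IntegrableOn Fu S₂ := by
    apply Integrable.mono' ((hWint.const_mul Mdφ).restrict (s := S₂)) hFumeas.restrict
    rw [ae_restrict_iff' hS₂meas]
    filter_upwards [haeΩ, haecoords] with x hxΩ hxc hxS₂
    obtain ⟨hxT, hxr⟩ := hxS₂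
    have hrx : 0 < r x := (hrpos x).1 hxΩ
    have hu1 : |u x| ≤ 1 * r x ^ ((1:ℝ) - p) :=
      hδ x hrx (lt_of_le_of_lt hxr (by linarith)) (htail x hxT)
    have hu2 : |u x| ≤ ∏ i : Fin p, |x (c i)| ^ a := by
      rw [one_mul] at hu1
      exact hu1.trans (by rw [ha]; exact hAMGM x hxc hrx)
    calc ‖Fu x‖ = |u x| * |dφ x| := abs_mul _ _
      _ ≤ (∏ i : Fin p, |x (c i)| ^ a) * Mdφ := by
          apply mul_le_mul hu2 (hMdφ x) (abs_nonneg _)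
          exact Finset.prod_nonneg fun i _ => Real.rpow_nonneg (abs_nonneg _) _
      _ = Mdφ * W x := by rw [hWval x hxT]; ring
  -- the large-radius part
  set S₁ : Set (Fin (p+q) → ℝ) := tsupport φ ∩ {x | δ/2 ≤ r x} with hS₁
  have hS₁comp : IsCompact S₁ :=
    hφc.inter_right (isClosed_le continuous_const hrcont)
  have hS₁Ω : S₁ ⊆ Ω := by
    rintro x ⟨-, hxr⟩
    exact (hrpos x).2 (lt_of_lt_of_le (by linarith) hxr)
  have hIntS₁ : IntegrableOn Fu S₁ :=
    ((hucont.mono hS₁Ω).mul hdφcont.continuousOn).integrableOn_compact hS₁comp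
  have hFusupp : Function.support Fu ⊆ tsupport φ := by
    intro x hx
    by_contra hxT
    have hnot : x ∉ tsupport (fderiv ℝ φ) := fun h => hxT (tsupport_fderiv_subset ℝ h)
    have h0 : fderiv ℝ φ x = 0 := image_eq_zero_of_notMem_tsupport hnot
    apply hx
    show u x * dφ x = 0
    have : dφ x = 0 := by rw [hdφ]; simp [h0]
    rw [this, mul_zero]
  have hFuInt : Integrable Fu volume := by
    rw [← integrableOn_iff_integrable_of_support_subset hFusupp]
    refine (hIntS₁.union hIntS₂).mono_set fun x hx => ?_
    rcases le_total (δ/2) (r x) with h | h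
    · exact Or.inl ⟨hx, h⟩
    · exact Or.inr ⟨hx, h⟩
  -- continuity facts
  have hχcont : ∀ n, Continuous (χ n) := fun n => (hχsmooth n).continuous
  have hfncont : ∀ n, Continuous (f n) := fun n => (hfsmooth n).continuous
  have hdfncont : ∀ n, Continuous (fun x => fderiv ℝ (f n) x (Pi.single j 1)) := by
    intro n
    exact ((hfsmooth n).continuous_fderiv_apply one_ne_zero).comp
      (continuous_id.prodMk continuous_const)
  -- integrability at fixed n
  have hfg : ∀ n, Integrable (fun x => f n x * φ x) volume := fun n =>
    ((hfncont n).mul hφcont).integrable_of_hasCompactSupport hφc.mul_left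
  have hfg' : ∀ n, Integrable (fun x => f n x * dφ x) volume := fun n =>
    ((hfncont n).mul hdφcont).integrable_of_hasCompactSupport hdφsupp.mul_left
  have hf'g : ∀ n, Integrable (fun x => fderiv ℝ (f n) x (Pi.single j 1) * φ x) volume := fun n =>
    ((hdfncont n).mul hφcont).integrable_of_hasCompactSupport hφc.mul_left
  -- integration by parts at fixed n
  have hIBP : ∀ n, ∫ x, f n x * dφ x =
      -∫ x, fderiv ℝ (f n) x (Pi.single j 1) * φ x := by
    intro n
    exact integral_mul_fderiv_eq_neg_fderiv_mul_of_integrable (hf'g n) (hfg' n) (hfg n)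
      (fun x _ => hfdiff n x) (fun x _ => hφ.differentiable (by simp) x)
  -- splitting the derivative integral
  have hpiece1int : ∀ n, Integrable (fun x => du x * χ n x * φ x) volume := by
    intro n
    apply Integrable.mono' (hduInt.abs.const_mul Mφ)
      ((hdumeas.mul (hχcont n).aestronglyMeasurable).mul hφcont.aestronglyMeasurable)
    filter_upwards with x
    show ‖du x * χ n x * φ x‖ ≤ Mφ * |du x|
    have h1 : ‖du x * χ n x * φ x‖ = |du x| * (|χ n x| * |φ x|) := by
      rw [Real.norm_eq_abs, abs_mul, abs_mul]; ring
    rw [h1]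
    have h2 : |χ n x| * |φ x| ≤ 1 * Mφ := by
      apply mul_le_mul _ _ (abs_nonneg _) zero_le_one
      · rw [abs_le]; exact ⟨by linarith [(hχmem n x).1], (hχmem n x).2⟩
      · exact (Real.norm_eq_abs (φ x)) ▸ hMφ x
    calc |du x| * (|χ n x| * |φ x|) ≤ |du x| * (1 * Mφ) :=
          mul_le_mul_of_nonneg_left h2 (abs_nonneg _)
      _ = Mφ * |du x| := by ring
  have hpiece2int : ∀ n, Integrable
      (fun x => u x * fderiv ℝ (χ n) x (Pi.single j 1) * φ x) volume := by
    intro n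
    have hae : (fun x => u x * fderiv ℝ (χ n) x (Pi.single j 1) * φ x) =ᵐ[volume]
        (fun x => fderiv ℝ (f n) x (Pi.single j 1) * φ x - du x * χ n x * φ x) := by
      filter_upwards [haeΩ] with x hx
      rw [hfderiv n x hx]; ring
    exact ((hf'g n).sub (hpiece1int n)).congr hae.symm
  have hsplit : ∀ n, ∫ x, fderiv ℝ (f n) x (Pi.single j 1) * φ x
      = (∫ x, du x * χ n x * φ x) + ∫ x, u x * fderiv ℝ (χ n) x (Pi.single j 1) * φ x := by
    intro n
    rw [← integral_add (hpiece1int n) (hpiece2int n)]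
    apply integral_congr_ae
    filter_upwards [haeΩ] with x hx
    rw [hfderiv n x hx]; ring
  -- eventual constancy in n for fixed x ∈ Ω
  have hev : ∀ x, x ∈ Ω → ∀ᶠ n : ℕ in atTop, χ n x = 1 := by
    intro x hx
    have hrx : 0 < r x := (hrpos x).1 hx
    rw [eventually_atTop]
    refine ⟨⌈2 / r x⌉₊, fun n hn => ?_⟩
    apply hχ1
    rw [div_le_iff₀ (hn1pos n)]
    have h1 : 2 / r x ≤ (n:ℝ) + 1 := by
      calc 2 / r x ≤ (⌈2 / r x⌉₊ : ℝ) := Nat.le_ceil _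
        _ ≤ (n:ℝ) := by exact_mod_cast hn
        _ ≤ (n:ℝ) + 1 := by linarith
    calc (2:ℝ) = (2 / r x) * r x := by field_simp
      _ ≤ ((n:ℝ)+1) * r x := mul_le_mul_of_nonneg_right h1 hrx.le
      _ = r x * ((n:ℝ)+1) := by ring
  -- limit of the left-hand sides
  have hlim1 : Tendsto (fun n => ∫ x, f n x * dφ x) atTop (𝓝 (∫ x, Fu x)) := by
    apply tendsto_integral_of_dominated_convergence (fun x => |Fu x|)
      (fun n => ((hfncont n).mul hdφcont).aestronglyMeasurable) hFuInt.abs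
    · intro n
      filter_upwards with x
      show ‖u x * χ n x * dφ x‖ ≤ |u x * dφ x|
      have h1 : ‖u x * χ n x * dφ x‖ = |χ n x| * |u x * dφ x| := by
        rw [Real.norm_eq_abs]
        rw [abs_mul, abs_mul, abs_mul]
        ring
      rw [h1]
      calc |χ n x| * |u x * dφ x| ≤ 1 * |u x * dφ x| := by
            apply mul_le_mul_of_nonneg_right _ (abs_nonneg _)
            rw [abs_le]; exact ⟨by linarith [(hχmem n x).1], (hχmem n x).2⟩
        _ = |u x * dφ x| := one_mul _
    · filter_upwards [haeΩ] with x hx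
      apply Tendsto.congr' _ tendsto_const_nhds
      filter_upwards [hev x hx] with n hn
      show u x * dφ x = u x * χ n x * dφ x
      rw [hn, mul_one]
  have hduφint : Integrable (fun x => du x * φ x) volume := by
    apply Integrable.mono' (hduInt.abs.const_mul Mφ)
      (hdumeas.mul hφcont.aestronglyMeasurable)
    filter_upwards with x
    show ‖du x * φ x‖ ≤ Mφ * |du x|
    rw [Real.norm_eq_abs, abs_mul]
    calc |du x| * |φ x| ≤ |du x| * Mφ :=
          mul_le_mul_of_nonneg_left ((Real.norm_eq_abs (φ x)) ▸ hMφ x) (abs_nonneg _)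
      _ = Mφ * |du x| := by ring
  have hlim2 : Tendsto (fun n => ∫ x, du x * χ n x * φ x) atTop
      (𝓝 (∫ x, du x * φ x)) := by
    apply tendsto_integral_of_dominated_convergence (fun x => Mφ * |du x|)
      (fun n => (hdumeas.mul (hχcont n).aestronglyMeasurable).mul hφcont.aestronglyMeasurable)
      (hduInt.abs.const_mul Mφ)
    · intro n
      filter_upwards with x
      show ‖du x * χ n x * φ x‖ ≤ Mφ * |du x|
      have h1 : ‖du x * χ n x * φ x‖ = |du x| * (|χ n x| * |φ x|) := by
        rw [Real.norm_eq_abs, abs_mul, abs_mul]; ring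
      rw [h1]
      have h2 : |χ n x| * |φ x| ≤ 1 * Mφ := by
        apply mul_le_mul _ _ (abs_nonneg _) zero_le_one
        · rw [abs_le]; exact ⟨by linarith [(hχmem n x).1], (hχmem n x).2⟩
        · exact (Real.norm_eq_abs (φ x)) ▸ hMφ x
      calc |du x| * (|χ n x| * |φ x|) ≤ |du x| * (1 * Mφ) :=
            mul_le_mul_of_nonneg_left h2 (abs_nonneg _)
        _ = Mφ * |du x| := by ring
    · filter_upwards [haeΩ] with x hx
      apply Tendsto.congr' _ tendsto_const_nhds
      filter_upwards [hev x hx] with n hn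
      show du x * φ x = du x * χ n x * φ x
      rw [hn, mul_one]
  -- the sequence of boundary terms
  set T : ℕ → ℝ := fun n => ∫ x, u x * fderiv ℝ (χ n) x (Pi.single j 1) * φ x with hT
  have hTeq : ∀ n, T n = -(∫ x, f n x * dφ x) - ∫ x, du x * χ n x * φ x := by
    intro n
    have h1 := hIBP n
    rw [hsplit n] at h1
    rw [hT]
    linarith [h1]
  have hTlim : Tendsto T atTop (𝓝 (-(∫ x, Fu x) - ∫ x, du x * φ x)) := by
    have := (hlim1.neg).sub hlim2
    exact this.congr fun n => (hTeq n).symm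
  -- bound on the annulus measure
  have hann : ∀ n : ℕ, volume (tsupport φ ∩ {x | r x ≤ 2/((n:ℝ)+1)})
      ≤ ENNReal.ofReal ((4/((n:ℝ)+1))^p * (2*R)^q) := by
    intro n
    set I : Fin (p+q) → Set ℝ := fun k =>
      if (k:ℕ) < p then Set.Icc (-(2/((n:ℝ)+1))) (2/((n:ℝ)+1)) else Set.Icc (-R) R with hI
    have hsub : tsupport φ ∩ {x | r x ≤ 2/((n:ℝ)+1)} ⊆ Set.pi Set.univ I := by
      rintro x ⟨hxT, hxr⟩ k -
      by_cases hk : (k:ℕ) < p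
      · have hkc : k = c ⟨(k:ℕ), hk⟩ := by
          apply Fin.ext
          simp [hc, Fin.coe_castAdd]
        have habs : |x k| ≤ r x := by
          rw [hkc, hr]
          rw [← Real.sqrt_sq_eq_abs]
          apply Real.sqrt_le_sqrt
          exact Finset.single_le_sum (fun i _ => sq_nonneg (x (c i)))
            (Finset.mem_univ (⟨(k:ℕ), hk⟩ : Fin p))
        have : |x k| ≤ 2/((n:ℝ)+1) := habs.trans hxr
        simp only [hI, hk, if_true]
        exact abs_le.1 this
      · simp only [hI, hk, if_false]
        exact abs_le.1 (hcoordR x hxT k)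
    calc volume (tsupport φ ∩ {x | r x ≤ 2/((n:ℝ)+1)}) ≤ volume (Set.pi Set.univ I) :=
          measure_mono hsub
      _ = ∏ k, volume (I k) := volume_pi_pi I
      _ = ENNReal.ofReal ((4/((n:ℝ)+1))^p * (2*R)^q) := by
          have hval : ∀ k, volume (I k) = ENNReal.ofReal
              (if (k:ℕ) < p then 4/((n:ℝ)+1) else 2*R) := by
            intro k
            by_cases hk : (k:ℕ) < p
            · simp only [hI, hk, if_true, Real.volume_Icc]
              congr 1
              ring
            · simp only [hI, hk, if_false, Real.volume_Icc]
              congr 1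
              ring
          rw [Finset.prod_congr rfl fun k _ => hval k]
          rw [Fin.prod_univ_add (f := fun k : Fin (p+q) => ENNReal.ofReal
              (if (k:ℕ) < p then 4/((n:ℝ)+1) else 2*R))]
          have h1 : ∀ i : Fin p, ((c i : Fin (p+q)) : ℕ) < p := by
            intro i; simp [hc, Fin.coe_castAdd]
          have h2 : ∀ i : Fin q, ¬ (((Fin.natAdd p i : Fin (p+q)) : ℕ) < p) := by
            intro i; simp [Fin.natAdd]
          simp only [h1, h2, if_true, if_false]
          simp only [Fin.coe_castAdd, Fin.is_lt, ↓reduceIte, Finset.prod_const]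
          simp only [Finset.card_univ, Fintype.card_fin]
          rw [← ENNReal.ofReal_pow (by positivity), ← ENNReal.ofReal_pow (by positivity),
            ← ENNReal.ofReal_mul (by positivity)]
  -- the universal constant
  set Cst : ℝ := L * Mφ * 4^p * (2*R)^q with hCst
  have hCstnn : 0 ≤ Cst := by
    rw [hCst]
    have h2R : (0:ℝ) ≤ 2*R := by linarith
    positivity
  -- eventual bound for T
  have hTbnd : ∀ η : ℝ, 0 < η → ∀ᶠ n : ℕ in atTop, ‖T n‖ ≤ η * Cst := by
    intro η hη
    obtain ⟨δ', hδ'pos, hδ'⟩ := hsmall K hKcomp η hη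
    have hev2 : ∀ᶠ n : ℕ in atTop, 2/((n:ℝ)+1) < δ' := by
      rw [eventually_atTop]
      refine ⟨⌈2/δ'⌉₊, fun n hn => ?_⟩
      rw [div_lt_iff₀ (hn1pos n)]
      have h1 : 2 / δ' ≤ (n:ℝ) := by
        calc 2/δ' ≤ (⌈2/δ'⌉₊ : ℝ) := Nat.le_ceil _
          _ ≤ (n:ℝ) := by exact_mod_cast hn
      calc (2:ℝ) = (2/δ') * δ' := by field_simp
        _ ≤ (n:ℝ) * δ' := mul_le_mul_of_nonneg_right h1 hδ'pos.le
        _ < ((n:ℝ)+1) * δ' := by nlinarith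
        _ = δ' * ((n:ℝ)+1) := by ring
    filter_upwards [hev2] with n hn
    set Bn : ℝ := η * ((n:ℝ)+1)^((p:ℝ)-1) * (L*((n:ℝ)+1)) * Mφ with hBn
    have hBnnn : 0 ≤ Bn := by
      rw [hBn]
      have h1 : (0:ℝ) ≤ ((n:ℝ)+1)^((p:ℝ)-1) := Real.rpow_nonneg (by positivity) _
      have h2 : (0:ℝ) ≤ L*((n:ℝ)+1) := by positivity
      positivity
    set I2 : Set (Fin (p+q) → ℝ) := tsupport φ ∩ {x | r x ≤ 2/((n:ℝ)+1)} with hI2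
    have hI2meas : MeasurableSet I2 :=
      (isClosed_tsupport φ).measurableSet.inter
        ((isClosed_le hrcont continuous_const).measurableSet)
    have hI2vol : volume I2 < ⊤ := lt_of_le_of_lt (hann n) ENNReal.ofReal_lt_top
    have hzero : ∀ x, x ∉ I2 → u x * fderiv ℝ (χ n) x (Pi.single j 1) * φ x = 0 := by
      intro x hx
      rw [hI2, Set.mem_inter_iff] at hx
      push_neg at hx
      by_cases hxT : x ∈ tsupport φ
      · have hxr : 2/((n:ℝ)+1) < r x := by
          have := hx hxT
          simpa using lt_of_not_ge (by simpa using this)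
        have hfd : fderiv ℝ (χ n) x = 0 := by
          rw [(hχ1nhds n x hxr).fderiv_eq]
          exact fderiv_const_apply 1
        rw [hfd]
        simp
      · rw [image_eq_zero_of_notMem_tsupport hxT, mul_zero]
    have hptbnd : ∀ x ∈ I2, ‖u x * fderiv ℝ (χ n) x (Pi.single j 1) * φ x‖ ≤ Bn := by
      intro x hxI
      obtain ⟨hxT, hxr⟩ := hxI
      rcases lt_or_ge (r x) (1/((n:ℝ)+1)) with hrlt | hrge
      · have hfd : fderiv ℝ (χ n) x = 0 := by
          rw [(hχ0nhds n x hrlt).fderiv_eq]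
          exact fderiv_const_apply 0
        rw [hfd]
        simpa using hBnnn
      · have hrx : 0 < r x := lt_of_lt_of_le (by positivity) hrge
        have hrlt' : r x < δ' := lt_of_le_of_lt hxr hn
        have hu1 : |u x| ≤ η * r x ^ ((1:ℝ) - p) := hδ' x hrx hrlt' (htail x hxT)
        have hu2 : |u x| ≤ η * ((n:ℝ)+1)^((p:ℝ)-1) := by
          refine hu1.trans ?_
          apply mul_le_mul_of_nonneg_left _ hη.le
          have h3 : r x ^ ((1:ℝ) - p) ≤ (1/((n:ℝ)+1)) ^ ((1:ℝ) - p) :=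
            Real.rpow_le_rpow_of_nonpos (by positivity) hrge (by linarith)
          refine h3.trans_eq ?_
          rw [one_div, ← Real.rpow_neg_one ((n:ℝ)+1),
            ← Real.rpow_mul (by positivity : (0:ℝ) ≤ (n:ℝ)+1)]
          congr 1
          ring
        have hb2 : |fderiv ℝ (χ n) x (Pi.single j 1)| ≤ L*((n:ℝ)+1) := hχderiv n x
        have hb3 : |φ x| ≤ Mφ := (Real.norm_eq_abs (φ x)) ▸ hMφ x
        have habs : ‖u x * fderiv ℝ (χ n) x (Pi.single j 1) * φ x‖
            = |u x| * |fderiv ℝ (χ n) x (Pi.single j 1)| * |φ x| := by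
          rw [Real.norm_eq_abs, abs_mul, abs_mul]
        rw [habs, hBn]
        have h4 : (0:ℝ) ≤ η * ((n:ℝ)+1)^((p:ℝ)-1) := (abs_nonneg _).trans hu2
        have h5 : (0:ℝ) ≤ η * ((n:ℝ)+1)^((p:ℝ)-1) * (L*((n:ℝ)+1)) :=
          mul_nonneg h4 ((abs_nonneg _).trans hb2)
        exact mul_le_mul (mul_le_mul hu2 hb2 (abs_nonneg _) h4) hb3 (abs_nonneg _) h5
    have hTn : T n = ∫ x in I2, u x * fderiv ℝ (χ n) x (Pi.single j 1) * φ x := by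
      rw [hT]
      exact (setIntegral_eq_integral_of_forall_compl_eq_zero hzero).symm
    have hTn2 : ‖T n‖ ≤ Bn * (volume I2).toReal := by
      rw [hTn]
      exact norm_setIntegral_le_of_norm_le_const hI2vol hptbnd
    have hvolR : (volume I2).toReal ≤ (4/((n:ℝ)+1))^p * (2*R)^q := by
      apply ENNReal.toReal_le_of_le_ofReal (by positivity)
      exact hann n
    calc ‖T n‖ ≤ Bn * ((4/((n:ℝ)+1))^p * (2*R)^q) := by
          refine hTn2.trans (mul_le_mul_of_nonneg_left hvolR hBnnn)
      _ = η * Cst := by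
          rw [hBn, hCst]
          have hx : (0:ℝ) < (n:ℝ)+1 := hn1pos n
          have hkey : ((n:ℝ)+1)^((p:ℝ)-1) * (((n:ℝ)+1)) * (((n:ℝ)+1)^(p:ℕ))⁻¹ = 1 := by
            rw [← Real.rpow_natCast ((n:ℝ)+1) p, ← Real.rpow_neg hx.le]
            nth_rewrite 2 [← Real.rpow_one ((n:ℝ)+1)]
            rw [← Real.rpow_add hx, ← Real.rpow_add hx]
            rw [show ((p:ℝ) - 1 + 1 + -(p:ℝ)) = 0 by ring, Real.rpow_zero]
          have hdivpow : (4/((n:ℝ)+1))^p = 4^p * (((n:ℝ)+1)^(p:ℕ))⁻¹ := by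
            rw [div_pow, div_eq_mul_inv]
          rw [hdivpow]
          linear_combination (η * L * Mφ * 4^p * (2*R)^q) * hkey
  
  -- the limit of T is zero
  have hD : -(∫ x, Fu x) - (∫ x, du x * φ x) = 0 := by
    by_contra hne
    have hpos : 0 < ‖-(∫ x, Fu x) - (∫ x, du x * φ x)‖ := norm_pos_iff.2 hne
    have hηpos : 0 < ‖-(∫ x, Fu x) - (∫ x, du x * φ x)‖ / (2*(Cst+1)) := by
      apply div_pos hpos
      linarith
    have hb := le_of_tendsto hTlim.norm ((hTbnd _ hηpos).mono fun n h => h)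
    have hlt : ‖-(∫ x, Fu x) - (∫ x, du x * φ x)‖ / (2*(Cst+1)) * Cst
        < ‖-(∫ x, Fu x) - (∫ x, du x * φ x)‖ := by
      rw [div_mul_eq_mul_div, div_lt_iff₀ (by linarith)]
      nlinarith
    linarith
  have hfinal : (∫ x, Fu x) = -(∫ x, du x * φ x) := by linarith
  rw [hrestrict]
  exact hfinal
end

section
/- For all u, v ∈ ℂ, lim_{N→∞} |1 + u v̄ / N|^N · ((1 + |u|²/N)(1 + |v|²/N))^{−N/2} = exp(−|u−v|²/2). (This is the near-diagonal scaling limit of the normalized Szegő kernel P_N(z,w) = |1+z w̄|^N ((1+|z|²)(1+|w|²))^{−N/2} of the degree-N SU(2) polynomial ensemble, rescaled at z = u/√N, w = v/√N.) -/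
open MeasureTheory Filter Topology Asymptotics

lemma aux_log_lim (a : ℕ → ℝ) (L : ℝ) (ha : Filter.Tendsto a atTop (𝓝 L)) :
    Filter.Tendsto (fun n : ℕ => (n : ℝ) * Real.log (1 + a n / n)) atTop (𝓝 L) := by
  have hd : HasDerivAt (fun x : ℝ => Real.log (1 + x)) 1 0 := by
    have := ((hasDerivAt_id (0:ℝ)).const_add 1).log (by norm_num)
    simpa using this
  have hx : Filter.Tendsto (fun n : ℕ => a n / n) atTop (𝓝 0) := by
    simpa using ha.div_atTop tendsto_natCast_atTop_atTop
  have hlo : (fun x : ℝ => Real.log (1 + x) - x) =o[𝓝 0] fun x => x := by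
    simpa using hd.isLittleO
  have hlo2 : (fun n : ℕ => Real.log (1 + a n / n) - a n / n) =o[atTop]
      fun n : ℕ => a n / n := hlo.comp_tendsto hx
  have hO : (fun n : ℕ => a n / n) =O[atTop] fun n : ℕ => ((n : ℝ))⁻¹ := by
    have := (ha.isBigO_one ℝ).mul (isBigO_refl (fun n : ℕ => ((n:ℝ))⁻¹) atTop)
    simpa [div_eq_mul_inv] using this
  have hlo3 : (fun n : ℕ => Real.log (1 + a n / n) - a n / n) =o[atTop]
      fun n : ℕ => ((n : ℝ))⁻¹ := hlo2.trans_isBigO hO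
  have h0 : Filter.Tendsto
      (fun n : ℕ => (Real.log (1 + a n / n) - a n / n) / ((n : ℝ))⁻¹) atTop (𝓝 0) :=
    hlo3.tendsto_div_nhds_zero
  have key : Filter.Tendsto
      (fun n : ℕ => (Real.log (1 + a n / n) - a n / n) / ((n : ℝ))⁻¹ + a n) atTop (𝓝 L) := by
    simpa using h0.add ha
  refine key.congr' ?_
  filter_upwards [eventually_gt_atTop 0] with n hn
  have hn' : (n : ℝ) ≠ 0 := Nat.cast_ne_zero.mpr hn.ne'
  field_simp
  ring

/-- Near-diagonal scaling limit of the normalized Szegő kernel of the SU(2) ensemble: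
`P_N(u/√N, v/√N) → exp(-|u-v|²/2)`. -/
theorem szego_kernel_scaling_limit (u v : ℂ) :
    Tendsto (fun N : ℕ =>
        ‖1 + u * (starRingEnd ℂ) v / N‖ ^ N *
          ((1 + ‖u‖ ^ 2 / N) * (1 + ‖v‖ ^ 2 / N)) ^ (-(N : ℝ) / 2))
      atTop (𝓝 (Real.exp (-‖u - v‖ ^ 2 / 2))) := by
  set w : ℂ := u * (starRingEnd ℂ) v with hw
  -- limits of the three log pieces
  have h1 : Tendsto (fun N : ℕ => (N : ℝ) * Real.log (1 + (2 * w.re + Complex.normSq w / N) / N))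
      atTop (𝓝 (2 * w.re)) := by
    refine aux_log_lim _ _ ?_
    have : Tendsto (fun N : ℕ => Complex.normSq w / N) atTop (𝓝 0) :=
      tendsto_const_nhds.div_atTop tendsto_natCast_atTop_atTop
    simpa using (tendsto_const_nhds (x := 2 * w.re)).add this
  have h2 : Tendsto (fun N : ℕ => (N : ℝ) * Real.log (1 + ‖u‖ ^ 2 / N))
      atTop (𝓝 (‖u‖ ^ 2)) := aux_log_lim _ _ tendsto_const_nhds
  have h3 : Tendsto (fun N : ℕ => (N : ℝ) * Real.log (1 + ‖v‖ ^ 2 / N))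
      atTop (𝓝 (‖v‖ ^ 2)) := aux_log_lim _ _ tendsto_const_nhds
  have hsum : Tendsto (fun N : ℕ =>
      (1 / 2) * ((N : ℝ) * Real.log (1 + (2 * w.re + Complex.normSq w / N) / N))
        + (-(1 / 2)) * ((N : ℝ) * Real.log (1 + ‖u‖ ^ 2 / N))
        + (-(1 / 2)) * ((N : ℝ) * Real.log (1 + ‖v‖ ^ 2 / N))) atTop
      (𝓝 ((1 / 2) * (2 * w.re) + (-(1 / 2)) * ‖u‖ ^ 2
          + (-(1 / 2)) * ‖v‖ ^ 2)) :=
    ((h1.const_mul _).add (h2.const_mul _)).add (h3.const_mul _)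
  have hval : (1 / 2 : ℝ) * (2 * w.re) + (-(1 / 2)) * ‖u‖ ^ 2
      + (-(1 / 2)) * ‖v‖ ^ 2 = -‖u - v‖ ^ 2 / 2 := by
    have : ‖u - v‖ ^ 2 = Complex.normSq u + Complex.normSq v
        - 2 * (u * (starRingEnd ℂ) v).re := by
      rw [Complex.sq_norm]; exact Complex.normSq_sub u v
    rw [this, hw, ← Complex.sq_norm u, ← Complex.sq_norm v]
    ring
  rw [← hval]
  have := (Real.continuous_exp.tendsto _).comp hsum
  refine this.congr' ?_
  have hev : ∀ᶠ N : ℕ in atTop, ‖w‖ < (N : ℝ) :=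
    tendsto_natCast_atTop_atTop.eventually_gt_atTop (‖w‖)
  filter_upwards [eventually_gt_atTop 0, hev] with N hN hNw
  have hN' : (0 : ℝ) < N := by exact_mod_cast hN
  have hBu : (0 : ℝ) < 1 + ‖u‖ ^ 2 / N := by positivity
  have hBv : (0 : ℝ) < 1 + ‖v‖ ^ 2 / N := by positivity
  have habs : (1 : ℝ) + (2 * w.re + Complex.normSq w / N) / N
      = ‖1 + w / N‖ ^ 2 := by
    rw [Complex.sq_norm, Complex.normSq_add]
    simp only [Complex.normSq_one, Complex.normSq_div, Complex.normSq_natCast,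
      Complex.div_re, Complex.one_re, Complex.one_im, Complex.natCast_re,
      Complex.natCast_im, Complex.normSq_natCast, Complex.conj_conj, one_mul, Complex.conj_re]
    have : Complex.normSq (N : ℂ) = (N : ℝ) ^ 2 := by
      simp [Complex.normSq_natCast, sq]
    field_simp
    ring
  have hApos : (0 : ℝ) < ‖1 + w / N‖ := by
    have h1 : ‖w / N‖ < 1 := by
      rw [norm_div]
      simp only [Complex.norm_natCast]
      rw [div_lt_one hN']
      exact hNw
    have : (1 : ℝ) ≤ ‖1 + w / N‖ + ‖w / N‖ := by
      calc (1 : ℝ) = ‖1 + w / N - w / N‖ := by norm_num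
        _ ≤ _ := by
            simpa using norm_sub_le (1 + w / N) (w / N)
    linarith
  simp only [Function.comp_apply]
  rw [habs, Real.log_pow, Real.rpow_def_of_pos (mul_pos hBu hBv),
    Real.log_mul hBu.ne' hBv.ne',
    ← Real.exp_log (pow_pos hApos N), Real.log_pow, ← Real.exp_add]
  congr 1
  push_cast
  ring
end
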